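/- Let R be a commutative ring, N ≥ 2, z : Fin N → R, and Q : Fin N → Fin N → R a symmetric matrix with Q (N-2) (N-2) = 0, Q (N-1) (N-1) = 0, and with q := Q (N-2) (N-1) a unit of R. Define z' := z (N-2) + q⁻¹ * ∑_{b ≤ N-3} Q b (N-1) * z b and z'' := q * z (N-1) + ∑_{c ≤ N-3} Q (N-2) c * z c. Then ∑_{b,c} z b * z c * Q b c = ∑_{b,c ≤ N-3} z b * z c * (Q b c − q⁻¹ * (Q b (N-1) * Q (N-2) c + Q (N-2) b * Q c (N-1))) + 2 * z' * z''. -/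

import Mathlib

/-!
Let `x = z (N-2)`, `y = z (N-1)`, `u = ∑ Q b (N-1) * z b` and `v = ∑ Q (N-2) c * z c` (sums over
`b, c ≤ N-3`). Peeling off the last two variables, using symmetry and `Q (N-2) (N-2) = Q (N-1) (N-1) = 0`,
writes the form as `Q' + 2 x v + 2 y (u + q x)` with `Q'` the form on the first `N-2` variables.
Expanding `2 (x + q⁻¹ u) (q y + v) = 2 q x y + 2 x v + 2 u y + 2 q⁻¹ u v` shows that the rank-two
correction of `Q'` must remove exactly `2 q⁻¹ u v`.
-/

open Finset

def quadForm {ι R : Type*} [Fintype ι] [CommRing R] (Q : ι → ι → R) (z : ι → R) : R :=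
  ∑ b, ∑ c, z b * z c * Q b c

theorem quadForm_fin_succ_of_symm {R : Type*} [CommRing R] {m : ℕ}
    {Q : Fin (m + 1) → Fin (m + 1) → R} (hQ : ∀ b c, Q b c = Q c b) (z : Fin (m + 1) → R) :
    quadForm Q z = quadForm (fun b c : Fin m => Q b.castSucc c.castSucc) (fun b => z b.castSucc) +
      2 * z (Fin.last m) * ∑ b : Fin m, Q b.castSucc (Fin.last m) * z b.castSucc +
        z (Fin.last m) ^ 2 * Q (Fin.last m) (Fin.last m) := by
  have hrow : ∑ b : Fin m, z (Fin.last m) * z b.castSucc * Q (Fin.last m) b.castSucc =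
      z (Fin.last m) * ∑ b : Fin m, Q b.castSucc (Fin.last m) * z b.castSucc := by
    rw [mul_sum]
    exact sum_congr rfl fun b _ => by rw [hQ]; ring
  have hcol : ∑ b : Fin m, z b.castSucc * z (Fin.last m) * Q b.castSucc (Fin.last m) =
      z (Fin.last m) * ∑ b : Fin m, Q b.castSucc (Fin.last m) * z b.castSucc := by
    rw [mul_sum]
    exact sum_congr rfl fun b _ => by ring
  simp only [quadForm, Fin.sum_univ_castSucc, sum_add_distrib, hrow, hcol]
  ring

theorem quadForm_symm_outer {ι R : Type*} [Fintype ι] [CommRing R] (z A B : ι → R) :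
    quadForm (fun b c => A b * B c + B b * A c) z = 2 * (∑ b, A b * z b) * ∑ c, B c * z c := by
  have h : quadForm (fun b c => A b * B c) z = (∑ b, A b * z b) * ∑ c, B c * z c := by
    simp only [quadForm, sum_mul_sum]
    exact sum_congr rfl fun b _ => sum_congr rfl fun c _ => by ring
  have h' : quadForm (fun b c => B b * A c) z = quadForm (fun b c => A b * B c) z := by
    simp only [quadForm]
    rw [sum_comm]
    exact sum_congr rfl fun b _ => sum_congr rfl fun c _ => by ring
  simp only [quadForm, mul_add, sum_add_distrib] at h h' ⊢
  rw [h', h]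
  ring

theorem quadForm_sub_smul_symm_outer {ι R : Type*} [Fintype ι] [CommRing R] (Q : ι → ι → R)
    (z A B : ι → R) (r : R) :
    quadForm (fun b c => Q b c - r * (A b * B c + B b * A c)) z =
      quadForm Q z - 2 * r * (∑ b, A b * z b) * ∑ c, B c * z c := by
  have h := quadForm_symm_outer z A B
  simp only [quadForm, mul_sub, sum_sub_distrib, mul_left_comm _ r, ← mul_sum] at h ⊢
  rw [h]
  ring

/-- `N = n + 2`: the index `N-2` is `(Fin.last n).castSucc`, `N-1` is `Fin.last (n + 1)`, and the
indices `≤ N-3` are `b.castSucc.castSucc` for `b : Fin n`. -/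
theorem hyperbolic_splitting {R : Type*} [CommRing R] (n : ℕ)
    (z : Fin (n + 2) → R) (Q : Fin (n + 2) → Fin (n + 2) → R)
    (hsym : ∀ b c, Q b c = Q c b)
    (h₁ : Q ((Fin.last n).castSucc) ((Fin.last n).castSucc) = 0)
    (h₂ : Q (Fin.last (n + 1)) (Fin.last (n + 1)) = 0)
    [Invertible (Q ((Fin.last n).castSucc) (Fin.last (n + 1)))] :
    ∑ b : Fin (n + 2), ∑ c : Fin (n + 2), z b * z c * Q b c =
      (∑ b : Fin n, ∑ c : Fin n, z b.castSucc.castSucc * z c.castSucc.castSucc *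
        (Q b.castSucc.castSucc c.castSucc.castSucc -
          ⅟ (Q ((Fin.last n).castSucc) (Fin.last (n + 1))) *
            (Q b.castSucc.castSucc (Fin.last (n + 1)) *
              Q ((Fin.last n).castSucc) c.castSucc.castSucc +
             Q ((Fin.last n).castSucc) b.castSucc.castSucc *
              Q c.castSucc.castSucc (Fin.last (n + 1)))))
      + 2 * (z ((Fin.last n).castSucc) +
              ⅟ (Q ((Fin.last n).castSucc) (Fin.last (n + 1))) *
                ∑ b : Fin n, Q b.castSucc.castSucc (Fin.last (n + 1)) *
                  z b.castSucc.castSucc)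
          * (Q ((Fin.last n).castSucc) (Fin.last (n + 1)) * z (Fin.last (n + 1)) +
              ∑ c : Fin n, Q ((Fin.last n).castSucc) c.castSucc.castSucc *
                z c.castSucc.castSucc) := by
  have hv : ∑ b : Fin n, Q b.castSucc.castSucc (Fin.last n).castSucc * z b.castSucc.castSucc =
      ∑ c : Fin n, Q (Fin.last n).castSucc c.castSucc.castSucc * z c.castSucc.castSucc :=
    sum_congr rfl fun b _ => by rw [hsym]
  change quadForm Q z = quadForm _ (fun b : Fin n => z b.castSucc.castSucc) + _
  rw [quadForm_fin_succ_of_symm hsym, quadForm_fin_succ_of_symm fun b c => hsym _ _,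
    Fin.sum_univ_castSucc, h₁, h₂, quadForm_sub_smul_symm_outer]
  linear_combination 2 * z (Fin.last n).castSucc * hv - 2 * z (Fin.last (n + 1)) *
    (∑ b : Fin n, Q b.castSucc.castSucc (Fin.last (n + 1)) * z b.castSucc.castSucc) *
      mul_invOf_self (Q (Fin.last n).castSucc (Fin.last (n + 1)))
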